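/- Let a and b be real analytic functions on U with b(γ(s)) ≠ 0 for every s ∈ [0,L), and set ψ(s) = a(γ(s))/b(γ(s)). If γ is non-oscillating at O, then there exists s₀ ∈ [0,L) such that the restriction of ψ to [s₀,L) is either constant or strictly monotone; moreover, if ψ is bounded then ψ(s) has a finite limit as s → L. -/

import Mathlib

/-!
Along `γ` the derivative of `ψ = a / b` is `|∇f|⁻¹ b⁻² N(γ)`, where
`N = b ⟨∇a, ∇f⟩ - a ⟨∇b, ∇f⟩` is real analytic. By non-oscillation `N ∘ γ` either vanishes near `L`,
and then `ψ` is eventually constant, or has no zeros near `L`, hence a constant sign by the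
intermediate value theorem, and then `ψ` is eventually strictly monotone. A bounded monotone
function has a one-sided limit.
-/

open scoped RealInnerProductSpace Topology
open Filter Set

theorem exists_mem_Ico_forall_of_eventually_nhdsLT {α : Type*} [LinearOrder α] [TopologicalSpace α]
    [OrderTopology α] [NoMinOrder α] [DenselyOrdered α] {P : α → Prop} {a L : α} (haL : a < L)
    (hP : ∀ᶠ s in 𝓝[<] L, P s) : ∃ s₀ ∈ Ico a L, ∀ s ∈ Ico s₀ L, P s := by
  obtain ⟨l, hl, hsub⟩ := mem_nhdsLT_iff_exists_Ico_subset.mp hP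
  exact ⟨max a l, ⟨le_max_left a l, max_lt haL hl⟩,
    fun s hs => hsub ⟨le_of_max_le_right hs.1, hs.2⟩⟩

theorem IsPreconnected.forall_lt_or_forall_gt {X α : Type*} [TopologicalSpace X] [LinearOrder α]
    [TopologicalSpace α] [OrderClosedTopology α] {s : Set X} (hs : IsPreconnected s) {g : X → α}
    (hg : ContinuousOn g s) {c : α} (hne : ∀ x ∈ s, g x ≠ c) :
    (∀ x ∈ s, c < g x) ∨ ∀ x ∈ s, g x < c := by
  by_contra! h
  obtain ⟨⟨x, hx, hgx⟩, ⟨y, hy, hgy⟩⟩ := h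
  obtain ⟨z, hz, hgz⟩ := hs.intermediate_value hx hy hg ⟨hgx, hgy⟩
  exact hne z hz hgz

theorem eq_of_hasDerivAt_zero_on_Ico {ψ : ℝ → ℝ} {a L : ℝ} (hψ : ∀ s ∈ Ico a L, HasDerivAt ψ 0 s)
    {s t : ℝ} (hs : s ∈ Ico a L) (ht : t ∈ Ico a L) : ψ s = ψ t := by
  wlog hst : s ≤ t generalizing s t
  · exact (this ht hs (le_of_not_ge hst)).symm
  have hsub : Icc s t ⊆ Ico a L := Icc_subset_Ico hs.1 ht.2
  exact (constant_of_has_deriv_right_zero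
    (fun x hx => (hψ x (hsub hx)).continuousAt.continuousWithinAt)
    (fun x hx => (hψ x (hsub (Ico_subset_Icc_self hx))).hasDerivWithinAt) t ⟨hst, le_rfl⟩).symm

theorem exists_const_or_strictMonoOn_or_strictAntiOn_Ico {ψ c w : ℝ → ℝ} {a L : ℝ} (haL : a < L)
    (hψ : ∀ s ∈ Ico a L, HasDerivAt ψ (c s * w s) s) (hc : ∀ s ∈ Ico a L, 0 < c s)
    (hw : ContinuousOn w (Ico a L))
    (hw_dich : (∀ᶠ s in 𝓝[<] L, w s = 0) ∨ ∀ᶠ s in 𝓝[<] L, w s ≠ 0) :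
    ∃ s₀ ∈ Ico a L, (∀ s ∈ Ico s₀ L, ∀ t ∈ Ico s₀ L, ψ s = ψ t) ∨
      StrictMonoOn ψ (Ico s₀ L) ∨ StrictAntiOn ψ (Ico s₀ L) := by
  rcases hw_dich with hzero | hnz
  · obtain ⟨s₀, hs₀, hw₀⟩ := exists_mem_Ico_forall_of_eventually_nhdsLT haL hzero
    have hsub : Ico s₀ L ⊆ Ico a L := Ico_subset_Ico_left hs₀.1
    refine ⟨s₀, hs₀, Or.inl fun s hs t ht => eq_of_hasDerivAt_zero_on_Ico (fun x hx => ?_) hs ht⟩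
    simpa only [hw₀ x hx, mul_zero] using hψ x (hsub hx)
  · obtain ⟨s₀, hs₀, hw₀⟩ := exists_mem_Ico_forall_of_eventually_nhdsLT haL hnz
    have hsub : Ico s₀ L ⊆ Ico a L := Ico_subset_Ico_left hs₀.1
    have hcont : ContinuousOn ψ (Ico s₀ L) :=
      fun s hs => (hψ s (hsub hs)).continuousAt.continuousWithinAt
    have hderiv : ∀ s ∈ interior (Ico s₀ L), deriv ψ s = c s * w s :=
      fun s hs => (hψ s (hsub (interior_subset hs))).deriv
    refine ⟨s₀, hs₀, Or.inr ?_⟩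
    rcases isPreconnected_Ico.forall_lt_or_forall_gt (hw.mono hsub) hw₀ with hpos | hneg
    · refine Or.inl (strictMonoOn_of_deriv_pos (convex_Ico s₀ L) hcont fun s hs => ?_)
      have hs' := interior_subset hs
      exact hderiv s hs ▸ mul_pos (hc s (hsub hs')) (hpos s hs')
    · refine Or.inr (strictAntiOn_of_deriv_neg (convex_Ico s₀ L) hcont fun s hs => ?_)
      have hs' := interior_subset hs
      exact hderiv s hs ▸ mul_neg_of_pos_of_neg (hc s (hsub hs')) (hneg s hs')

theorem exists_tendsto_nhdsLT_of_monotoneOn_or_antitoneOn {ψ : ℝ → ℝ} {s₀ L M : ℝ} (hs₀ : s₀ < L)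
    (hψ : MonotoneOn ψ (Ico s₀ L) ∨ AntitoneOn ψ (Ico s₀ L)) (hM : ∀ s ∈ Ico s₀ L, |ψ s| ≤ M) :
    ∃ c, Tendsto ψ (𝓝[<] L) (𝓝 c) := by
  have hne : (Ioo s₀ L).Nonempty := nonempty_Ioo.mpr hs₀
  have hM' : ∀ s ∈ Ioo s₀ L, |ψ s| ≤ M := fun s hs => hM s (Ioo_subset_Ico_self hs)
  rcases hψ with hmono | hanti
  · exact ⟨_, (hmono.mono Ioo_subset_Ico_self).tendsto_nhdsWithin_Ioo_left hne
      ⟨M, forall_mem_image.2 fun s hs => (abs_le.1 (hM' s hs)).2⟩⟩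
  · exact ⟨_, (hanti.mono Ioo_subset_Ico_self).tendsto_nhdsWithin_Ioo_left hne
      ⟨-M, forall_mem_image.2 fun s hs => (abs_le.1 (hM' s hs)).1⟩⟩

theorem AnalyticAt.inner {E F : Type*} [NormedAddCommGroup E] [InnerProductSpace ℝ E]
    [NormedAddCommGroup F] [NormedSpace ℝ F] {u v : F → E} {x : F} (hu : AnalyticAt ℝ u x) (hv : AnalyticAt ℝ v x) :
    AnalyticAt ℝ (fun y => ⟪u y, v y⟫) x :=
  ((innerSL ℝ (E := E)).analyticAt_bilinear _).comp₂ hu hv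

section Gradient

variable {E : Type*} [NormedAddCommGroup E] [InnerProductSpace ℝ E] [CompleteSpace E]

theorem HasGradientAt.hasDerivAt_comp {g : E → ℝ} {g' : E} {γ : ℝ → E} {v : E} {s : ℝ}
    (hg : HasGradientAt g g' (γ s)) (hγ : HasDerivAt γ v s) :
    HasDerivAt (fun t => g (γ t)) ⟪g', v⟫ s :=
  (hasGradientAt_iff_hasFDerivAt.mp hg).comp_hasDerivAt s hγ

theorem AnalyticAt.gradient {g : E → ℝ} {x : E} (hg : AnalyticAt ℝ g x) :
    AnalyticAt ℝ (gradient g) x :=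
  ((InnerProductSpace.toDual ℝ E).symm.analyticAt _).comp hg.fderiv

/-- `b²` times the derivative of `a / b` in the direction `∇f`. -/
noncomputable def quotientDerivNumerator (f a b : E → ℝ) (x : E) : ℝ :=
  b x * ⟪gradient a x, gradient f x⟫ - a x * ⟪gradient b x, gradient f x⟫

theorem AnalyticAt.quotientDerivNumerator {f a b : E → ℝ} {x : E}
    (hf : AnalyticAt ℝ f x) (ha : AnalyticAt ℝ a x) (hb : AnalyticAt ℝ b x) :
    AnalyticAt ℝ (quotientDerivNumerator f a b) x := by
  unfold _root_.quotientDerivNumerator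
  exact (hb.mul (ha.gradient.inner hf.gradient)).sub (ha.mul (hb.gradient.inner hf.gradient))

theorem hasDerivAt_div_comp_of_hasDerivAt_smul_gradient {f a b : E → ℝ} {γ : ℝ → E} {s k : ℝ}
    (hγ : HasDerivAt γ (k • gradient f (γ s)) s) (ha : DifferentiableAt ℝ a (γ s))
    (hb : DifferentiableAt ℝ b (γ s)) (hb0 : b (γ s) ≠ 0) :
    HasDerivAt (fun t => a (γ t) / b (γ t))
      (k / b (γ s) ^ 2 * quotientDerivNumerator f a b (γ s)) s := by
  refine ((ha.hasGradientAt.hasDerivAt_comp hγ).div (hb.hasGradientAt.hasDerivAt_comp hγ)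
    hb0).congr_deriv ?_
  simp only [quotientDerivNumerator, real_inner_smul_right]
  ring

end Gradient

theorem monotonicity_of_analytic_ratio_along_nonoscillating_trajectory
    {n : ℕ}
    (U : Set (EuclideanSpace ℝ (Fin n)))
    (hOU : (0 : EuclideanSpace ℝ (Fin n)) ∈ U)
    (f : EuclideanSpace ℝ (Fin n) → ℝ)
    (hfan : AnalyticOnNhd ℝ f U)
    (L : ℝ) (hL : 0 < L)
    (γ : ℝ → EuclideanSpace ℝ (Fin n))
    (hγU : ∀ s ∈ Set.Ico (0 : ℝ) L, γ s ∈ U)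
    (hγreg : ∀ s ∈ Set.Ico (0 : ℝ) L, gradient f (γ s) ≠ 0)
    (hγode : ∀ s ∈ Set.Ico (0 : ℝ) L,
      HasDerivAt γ (‖gradient f (γ s)‖⁻¹ • gradient f (γ s)) s)
    (hosc : ∀ g : EuclideanSpace ℝ (Fin n) → ℝ, AnalyticAt ℝ g 0 →
      (∀ᶠ s in 𝓝[<] L, g (γ s) = 0) ∨ (∀ᶠ s in 𝓝[<] L, g (γ s) ≠ 0))
    (a b : EuclideanSpace ℝ (Fin n) → ℝ)
    (ha : AnalyticOnNhd ℝ a U) (hb : AnalyticOnNhd ℝ b U)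
    (hbne : ∀ s ∈ Set.Ico (0 : ℝ) L, b (γ s) ≠ 0) :
    (∃ s₀ ∈ Set.Ico (0 : ℝ) L,
      (∀ s ∈ Set.Ico s₀ L, ∀ t ∈ Set.Ico s₀ L, a (γ s) / b (γ s) = a (γ t) / b (γ t)) ∨
      StrictMonoOn (fun s => a (γ s) / b (γ s)) (Set.Ico s₀ L) ∨
      StrictAntiOn (fun s => a (γ s) / b (γ s)) (Set.Ico s₀ L)) ∧
    ((∃ M : ℝ, ∀ s ∈ Set.Ico (0 : ℝ) L, |a (γ s) / b (γ s)| ≤ M) →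
      ∃ c : ℝ, Tendsto (fun s => a (γ s) / b (γ s)) (𝓝[<] L) (𝓝 c)) := by
  have hN : AnalyticOnNhd ℝ (quotientDerivNumerator f a b) U :=
    fun x hx => (hfan x hx).quotientDerivNumerator (ha x hx) (hb x hx)
  have hψ : ∀ s ∈ Ico 0 L, HasDerivAt (fun t => a (γ t) / b (γ t))
      (‖gradient f (γ s)‖⁻¹ / b (γ s) ^ 2 * quotientDerivNumerator f a b (γ s)) s :=
    fun s hs => hasDerivAt_div_comp_of_hasDerivAt_smul_gradient (hγode s hs)
      (ha _ (hγU s hs)).differentiableAt (hb _ (hγU s hs)).differentiableAt (hbne s hs)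
  have hc : ∀ s ∈ Ico 0 L, 0 < ‖gradient f (γ s)‖⁻¹ / b (γ s) ^ 2 := fun s hs =>
    div_pos (inv_pos.2 (norm_pos_iff.2 (hγreg s hs))) (pow_two_pos_of_ne_zero (hbne s hs))
  have hNγ : ContinuousOn (fun s => quotientDerivNumerator f a b (γ s)) (Ico 0 L) := fun s hs =>
    ((hN _ (hγU s hs)).continuousAt.comp (hγode s hs).continuousAt).continuousWithinAt
  obtain ⟨s₀, hs₀, htri⟩ :=
    exists_const_or_strictMonoOn_or_strictAntiOn_Ico hL hψ hc hNγ (hosc _ (hN 0 hOU))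
  refine ⟨⟨s₀, hs₀, htri⟩, fun ⟨M, hM⟩ => exists_tendsto_nhdsLT_of_monotoneOn_or_antitoneOn hs₀.2
    ?_ fun s hs => hM s ⟨hs₀.1.trans hs.1, hs.2⟩⟩
  rcases htri with hconst | hmono | hanti
  · exact Or.inl fun s hs t ht _ => (hconst s hs t ht).le
  · exact Or.inl hmono.monotoneOn
  · exact Or.inr hanti.antitoneOn
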